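/- Let ρ be a probability measure on ℕ and ω a probability measure on ℕ. If for every α < ∞ the level set {ω : H(ω ∥ ρ) ≤ α} is considered in the total variation topology on probability measures on ℕ, then these level sets are compact; in particular, ω ↦ H(ω ∥ ρ) is a good rate function on M(ℕ). -/

import Mathlib

open Classical

/-- The space `M(ℕ)` of probability measures on `ℕ`, realized as probability mass
functions inside `ℓ¹`, so that its metric is (twice) the total variation distance
`∥π − π̂∥ = (1/2) ∑_k |π(k) − π̂(k)|`. -/
def ProbNat : Type :=
  {p : lp (fun _ : ℕ => ℝ) 1 // (∀ k, 0 ≤ p k) ∧ HasSum (fun k => p k) 1}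

noncomputable instance : MetricSpace ProbNat := by unfold ProbNat; infer_instance

/-- Relative entropy `H(ω ∥ ρ) = ∑_k ω(k) log(ω(k)/ρ(k))`, with values in `EReal`:
it is `+∞` if `ω` is not absolutely continuous with respect to `ρ` or if the
defining series fails to converge. -/
noncomputable def relEnt (ω ρ : ℕ → ℝ) : EReal :=
  if (∀ k, ρ k = 0 → ω k = 0) ∧ Summable (fun k => ω k * Real.log (ω k / ρ k))
    then ((∑' k, ω k * Real.log (ω k / ρ k) : ℝ) : EReal) else ⊤

/-!
Put `entropyIntegrand y x := y * klFun (x / y) = x log (x / y) - x + y`, extended lower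
semicontinuously by `0` or `∞` at `y = 0`. For probability vectors the correction terms `- x + y`
sum to zero, so `H(ω ∥ ρ) = ∑ₖ entropyIntegrand (ρ k) (ω k)`: a sum of nonnegative lower
semicontinuous functions of the coordinates, hence lower semicontinuous on `ℓ¹`.

A bounded subset of `ℓ¹` whose tails are uniformly small is totally bounded, so a sublevel set,
closed by lower semicontinuity, is compact once its tails are controlled. Where `ω k > e^(s+1) ρ k` one has
`klFun (ω k / ρ k) ≥ s ω k / ρ k`, hence `ω k ≤ e^(s+1) ρ k + entropyIntegrand (ρ k) (ω k) / s`
for every `k`; summing over `k ≥ N` bounds the tail of `ω` by `e^(s+1)` times the tail of `ρ`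
plus `H(ω ∥ ρ) / s`.
-/

open scoped ENNReal lp
open Set Filter Topology Bornology InformationTheory Real

theorem ENNReal.tsum_ofReal_eq_top {α : Type*} {f : α → ℝ} (hf : ∀ a, 0 ≤ f a) (h : ¬Summable f) :
    ∑' a, ENNReal.ofReal (f a) = ∞ := by
  contrapose! h
  exact (NNReal.summable_coe.2 (ENNReal.tsum_coe_ne_top_iff_summable.1 h)).congr
    fun a => Real.coe_toNNReal _ (hf a)

theorem lp.totallyBounded_image_sum_single {α E : Type*} [NormedAddCommGroup E] [ProperSpace E]
    [DecidableEq α] {p : ℝ≥0∞} [Fact (1 ≤ p)] {S : Set (lp (fun _ : α => E) p)} (hS : IsBounded S)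
    (s : Finset α) : TotallyBounded ((fun f => ∑ i ∈ s, lp.single p i (f i)) '' S) := by
  set coords : lp (fun _ : α => E) p → s → E := fun f i => f i
  have hcoords : LipschitzWith 1 coords := LipschitzWith.of_dist_le_mul fun f g => by
    rw [NNReal.coe_one, one_mul]
    refine (dist_pi_le_iff dist_nonneg).2 fun i => ?_
    simpa using (lp.lipschitzWith_one_eval p (i : α)).dist_le_mul f g
  set L : (s → E) → lp (fun _ : α => E) p := fun v => ∑ i : s, lp.single p i (v i)
  have hL : Continuous L := continuous_finsetSum _ fun i _ =>
    (lp.isometry_single (i : α)).continuous.comp (continuous_apply i)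
  refine ((hcoords.isBounded_image hS).isCompact_closure.image hL).totallyBounded.subset ?_
  rintro _ ⟨f, hf, rfl⟩
  exact ⟨coords f, subset_closure ⟨f, hf, rfl⟩, Finset.sum_coe_sort s fun i => lp.single p i (f i)⟩

theorem lp.norm_eq_tsum_norm {α E : Type*} [NormedAddCommGroup E] (f : ℓ¹(α, E)) :
    ‖f‖ = ∑' i, ‖f i‖ := by
  rw [lp.norm_eq_tsum_rpow (by simp)]; simp

theorem lp.summable_norm {α E : Type*} [NormedAddCommGroup E] (f : ℓ¹(α, E)) :
    Summable fun i => ‖f i‖ := by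
  simpa using (lp.memℓp f).summable (p := 1) (by simp)

theorem lp.dist_sum_single_range {E : Type*} [NormedAddCommGroup E] (f : ℓ¹(ℕ, E)) (N : ℕ) :
    dist f (∑ i ∈ Finset.range N, lp.single 1 i (f i)) = ∑' j, ‖f (j + N)‖ := by
  have h := lp.norm_compl_sum_single (p := 1) (by simp) f (Finset.range N)
  simp only [ENNReal.toReal_one, Real.rpow_one] at h
  rw [dist_eq_norm, h, lp.norm_eq_tsum_norm, ← (lp.summable_norm f).sum_add_tsum_nat_add N,
    add_sub_cancel_left]

theorem lp.totallyBounded_of_tsum_nat_add_lt {E : Type*} [NormedAddCommGroup E] [ProperSpace E]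
    {S : Set ℓ¹(ℕ, E)} (hS : IsBounded S)
    (htail : ∀ ε > 0, ∃ N, ∀ f ∈ S, ∑' j, ‖f (j + N)‖ < ε) : TotallyBounded S := by
  refine Metric.totallyBounded_iff.2 fun ε hε => ?_
  obtain ⟨N, hN⟩ := htail (ε / 2) (half_pos hε)
  obtain ⟨t, ht, hcover⟩ := Metric.totallyBounded_iff.1
    (lp.totallyBounded_image_sum_single hS (Finset.range N)) (ε / 2) (half_pos hε)
  refine ⟨t, ht, fun f hf => ?_⟩
  obtain ⟨y, hy, hfy⟩ := mem_iUnion₂.1 (hcover ⟨f, hf, rfl⟩)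
  refine mem_iUnion₂.2 ⟨y, hy, Metric.mem_ball.2 ?_⟩
  calc dist f y ≤ dist f (∑ i ∈ Finset.range N, lp.single 1 i (f i)) + dist _ y :=
        dist_triangle _ _ _
    _ < ε / 2 + ε / 2 := by
      rw [lp.dist_sum_single_range]; exact add_lt_add (hN f hf) (Metric.mem_ball.1 hfy)
    _ = ε := add_halves ε

theorem mul_klFun_div {x y : ℝ} (hy : y ≠ 0) : y * klFun (x / y) = x * log (x / y) - x + y := by
  rw [klFun_apply]; field_simp; ring

theorem le_exp_add_klFun_div {s u : ℝ} (hs : 0 < s) (hu : 0 ≤ u) :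
    u ≤ exp (s + 1) + klFun u / s := by
  rcases le_or_gt u (exp (s + 1)) with h | h
  · linarith [div_nonneg (klFun_nonneg hu) hs.le]
  · have hlog : s + 1 ≤ log u := (le_log_iff_exp_le (exp_pos _ |>.trans h)).2 h.le
    have : u ≤ klFun u / s := by
      rw [le_div_iff₀ hs, klFun_apply]; nlinarith
    linarith [exp_pos (s + 1)]

noncomputable def entropyIntegrand (y : ℝ) : ℝ → ℝ≥0∞ :=
  if y = 0 then (Ioi 0).indicator fun _ => ∞ else fun x => ENNReal.ofReal (y * klFun (x / y))

theorem lowerSemicontinuous_entropyIntegrand (y : ℝ) :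
    LowerSemicontinuous (entropyIntegrand y) := by
  unfold entropyIntegrand
  split_ifs
  · exact isOpen_Ioi.lowerSemicontinuous_indicator zero_le
  · exact (ENNReal.continuous_ofReal.comp (continuous_const.mul
      (continuous_klFun.comp (continuous_id.div_const y)))).lowerSemicontinuous

theorem entropyIntegrand_zero_eq_top {x : ℝ} (hx : 0 < x) : entropyIntegrand 0 x = ∞ := by
  simp [entropyIntegrand, hx]

theorem entropyIntegrand_eq_ofReal {x y : ℝ} (hxy : y = 0 → x = 0) :
    entropyIntegrand y x = ENNReal.ofReal (x * log (x / y) - x + y) := by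
  rcases eq_or_ne y 0 with rfl | hy
  · simp [entropyIntegrand, hxy rfl]
  · rw [entropyIntegrand, if_neg hy, mul_klFun_div hy]

theorem ofReal_le_exp_mul_add_entropyIntegrand {x y s : ℝ} (hy : 0 ≤ y) (hs : 0 < s) :
    ENNReal.ofReal x ≤
      ENNReal.ofReal (exp (s + 1) * y) + ENNReal.ofReal s⁻¹ * entropyIntegrand y x := by
  rcases le_or_gt x 0 with hx | hx
  · simp [ENNReal.ofReal_of_nonpos hx]
  rcases hy.eq_or_lt with rfl | hy
  · rw [entropyIntegrand_zero_eq_top hx,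
      ENNReal.mul_top (ENNReal.ofReal_pos.2 (inv_pos.2 hs)).ne']
    exact le_top.trans_eq (add_top _).symm
  · rw [entropyIntegrand, if_neg hy.ne', ← ENNReal.ofReal_mul (inv_nonneg.2 hs.le),
      ← ENNReal.ofReal_add (by positivity)
        (mul_nonneg (inv_nonneg.2 hs.le) (mul_nonneg hy.le (klFun_nonneg (by positivity))))]
    refine ENNReal.ofReal_le_ofReal ?_
    have key := mul_le_mul_of_nonneg_left (le_exp_add_klFun_div hs (div_nonneg hx.le hy.le)) hy.le
    rw [mul_div_cancel₀ x hy.ne'] at key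
    calc x ≤ y * (exp (s + 1) + klFun (x / y) / s) := key
      _ = exp (s + 1) * y + s⁻¹ * (y * klFun (x / y)) := by ring

theorem relEnt_eq_tsum_entropyIntegrand {ω ρ : ℕ → ℝ} (hω₀ : ∀ k, 0 ≤ ω k) (hω : HasSum ω 1)
    (hρ₀ : ∀ k, 0 ≤ ρ k) (hρ : HasSum ρ 1) :
    relEnt ω ρ = ((∑' k, entropyIntegrand (ρ k) (ω k) : ℝ≥0∞) : EReal) := by
  by_cases hac : ∀ k, ρ k = 0 → ω k = 0
  swap
  · push Not at hac
    obtain ⟨k, hk, hωk⟩ := hac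
    rw [relEnt, if_neg fun h => hωk (h.1 k hk), ENNReal.tsum_eq_top_of_eq_top
      ⟨k, hk ▸ entropyIntegrand_zero_eq_top ((hω₀ k).lt_of_ne' hωk)⟩, EReal.coe_ennreal_top]
  set g : ℕ → ℝ := fun k => ω k * log (ω k / ρ k) - ω k + ρ k with hg
  have hg₀ : ∀ k, 0 ≤ g k := fun k => by
    rcases eq_or_ne (ρ k) 0 with hk | hk
    · simp [hg, hk, hac k hk]
    · show 0 ≤ ω k * log (ω k / ρ k) - ω k + ρ k
      rw [← mul_klFun_div hk]
      exact mul_nonneg (hρ₀ k) (klFun_nonneg (div_nonneg (hω₀ k) (hρ₀ k)))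
  simp_rw [entropyIntegrand_eq_ofReal (hac _)]
  by_cases hs : Summable g
  · have hsum : HasSum (fun k => ω k * log (ω k / ρ k)) (∑' k, g k) := by
      have hterm : (fun k => ω k * log (ω k / ρ k)) = fun k => g k + ω k - ρ k := by
        funext k; simp only [g]; ring
      rw [hterm, ← add_sub_cancel_right (∑' k, g k) 1]
      exact (hs.hasSum.add hω).sub hρ
    rw [relEnt, if_pos ⟨hac, hsum.summable⟩, hsum.tsum_eq,
      ← ENNReal.ofReal_tsum_of_nonneg hg₀ hs, EReal.coe_ennreal_ofReal,
      max_eq_left (tsum_nonneg hg₀)]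
  · have hns : ¬Summable fun k => ω k * log (ω k / ρ k) := fun h =>
      hs ((h.sub hω.summable).add hρ.summable)
    rw [relEnt, if_neg fun h => hns h.2, ENNReal.tsum_ofReal_eq_top hg₀ hs, EReal.coe_ennreal_top]

theorem tsum_ofReal_nat_add_le {ρ : ℕ → ℝ} (hρ₀ : ∀ k, 0 ≤ ρ k) {s : ℝ} (hs : 0 < s) (p : ℕ → ℝ)
    (N : ℕ) :
    ∑' j, ENNReal.ofReal (p (j + N)) ≤ ENNReal.ofReal (exp (s + 1)) *
      ∑' j, ENNReal.ofReal (ρ (j + N)) + ENNReal.ofReal s⁻¹ * ∑' k, entropyIntegrand (ρ k) (p k) :=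
  calc ∑' j, ENNReal.ofReal (p (j + N))
      ≤ ∑' j, (ENNReal.ofReal (exp (s + 1) * ρ (j + N)) +
          ENNReal.ofReal s⁻¹ * entropyIntegrand (ρ (j + N)) (p (j + N))) :=
        ENNReal.tsum_le_tsum fun j => ofReal_le_exp_mul_add_entropyIntegrand (hρ₀ _) hs
    _ ≤ _ := by
      simp_rw [ENNReal.tsum_add, ENNReal.ofReal_mul (exp_pos _).le, ENNReal.tsum_mul_left]
      refine add_le_add le_rfl (mul_le_mul_right ?_ _)
      exact ENNReal.tsum_comp_le_tsum_of_injective (add_left_injective N)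
        fun k => entropyIntegrand (ρ k) (p k)

theorem exists_tsum_nat_add_lt_of_tsum_entropyIntegrand_le {ρ : ℕ → ℝ} (hρ₀ : ∀ k, 0 ≤ ρ k)
    (hρ : Summable ρ) {c : ℝ≥0∞} (hc : c ≠ ∞) {ε : ℝ} (hε : 0 < ε) :
    ∃ N, ∀ p : ℕ → ℝ, (∀ k, 0 ≤ p k) → Summable p →
      ∑' k, entropyIntegrand (ρ k) (p k) ≤ c → ∑' j, p (j + N) < ε := by
  set s := 2 * (c.toReal + 1) / ε
  have hs : 0 < s := by positivity
  have hsc : ENNReal.ofReal s⁻¹ * c < ENNReal.ofReal (ε / 2) := by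
    rw [← ENNReal.ofReal_toReal hc, ← ENNReal.ofReal_mul (by positivity),
      ENNReal.ofReal_lt_ofReal_iff (half_pos hε), inv_div, div_mul_eq_mul_div,
      div_lt_div_iff₀ (by positivity) two_pos]
    nlinarith [ENNReal.toReal_nonneg (a := c)]
  have htail := ENNReal.Tendsto.const_mul (ENNReal.tendsto_sum_nat_add _ hρ.tsum_ofReal_ne_top)
    (Or.inr (ENNReal.ofReal_ne_top (r := exp (s + 1))))
  rw [mul_zero] at htail
  obtain ⟨N, hN⟩ := (htail.eventually (gt_mem_nhds (ENNReal.ofReal_pos.2 (half_pos hε)))).exists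
  refine ⟨N, fun p hp₀ hp hpc => ?_⟩
  rw [← ENNReal.ofReal_lt_ofReal_iff hε, ENNReal.ofReal_tsum_of_nonneg (fun j => hp₀ _)
    ((summable_nat_add_iff N).2 hp)]
  calc _ ≤ _ := tsum_ofReal_nat_add_le hρ₀ hs p N
    _ < ENNReal.ofReal (ε / 2) + ENNReal.ofReal (ε / 2) :=
      ENNReal.add_lt_add hN ((mul_le_mul_right hpc _).trans_lt hsc)
    _ = ENNReal.ofReal ε := by
      rw [← ENNReal.ofReal_add (half_pos hε).le (half_pos hε).le, add_halves]

theorem ProbNat.norm_val (q : ProbNat) : ‖q.1‖ = 1 := by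
  rw [lp.norm_eq_tsum_norm]
  simp_rw [Real.norm_of_nonneg (q.2.1 _)]
  exact q.2.2.tsum_eq

theorem ProbNat.isClosedEmbedding_val : IsClosedEmbedding fun q : ProbNat => q.1 := by
  refine IsClosedEmbedding.subtypeVal ?_
  have hsum : ∀ p : ℓ¹(ℕ, ℝ), HasSum (fun k => p k) 1 ↔ lp.tsumCLM ℝ ℕ ℝ p = 1 := fun p => by
    rw [lp.tsumCLM_apply]
    exact (lp.summable_norm p).of_norm.hasSum_iff
  simp_rw [ofPred_and, ofPred_forall, hsum]
  exact (isClosed_iInter fun k => isClosed_le continuous_const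
    (lp.lipschitzWith_one_eval 1 k).continuous).inter
    (isClosed_eq (lp.tsumCLM ℝ ℕ ℝ).continuous continuous_const)

theorem ProbNat.totallyBounded_image_sublevel {ρ : ℕ → ℝ} (hρ₀ : ∀ k, 0 ≤ ρ k) (hρ : Summable ρ)
    {c : ℝ≥0∞} (hc : c ≠ ∞) :
    TotallyBounded ((fun q : ProbNat => q.1) ''
      {q | ∑' k, entropyIntegrand (ρ k) (q.1 k) ≤ c}) := by
  refine lp.totallyBounded_of_tsum_nat_add_lt (isBounded_iff_forall_norm_le.2 ⟨1, ?_⟩)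
    fun ε hε => ?_
  · rintro _ ⟨q, -, rfl⟩
    exact (ProbNat.norm_val q).le
  · obtain ⟨N, hN⟩ := exists_tsum_nat_add_lt_of_tsum_entropyIntegrand_le hρ₀ hρ hc hε
    refine ⟨N, ?_⟩
    rintro _ ⟨q, hq, rfl⟩
    simp_rw [Real.norm_of_nonneg (q.2.1 _)]
    exact hN _ q.2.1 q.2.2.summable hq

/-- for a fixed probability mass function `ρ` on ℕ, all level sets
`{ω : H(ω ∥ ρ) ≤ α}` of the relative entropy are compact in the total variation
topology on `M(ℕ)`; in particular `H(· ∥ ρ)` is a good rate function. -/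
theorem relEnt_good_rate_function
    (ρ : ℕ → ℝ) (hρnn : ∀ k, 0 ≤ ρ k) (hρ : HasSum ρ 1) :
    (∀ α : ℝ, IsCompact {q : ProbNat | relEnt (fun k => q.1 k) ρ ≤ (α : EReal)}) ∧
    LowerSemicontinuous (fun q : ProbNat => relEnt (fun k => q.1 k) ρ) := by
  have hrel : ∀ q : ProbNat, relEnt (fun k => q.1 k) ρ =
      ((∑' k, entropyIntegrand (ρ k) (q.1 k) : ℝ≥0∞) : EReal) :=
    fun q => relEnt_eq_tsum_entropyIntegrand q.2.1 q.2.2 hρnn hρ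
  have hlsc : LowerSemicontinuous fun q : ProbNat => relEnt (fun k => q.1 k) ρ := by
    simp_rw [hrel]
    exact continuous_coe_ennreal_ereal.comp_lowerSemicontinuous
      (lowerSemicontinuous_tsum fun k => (lowerSemicontinuous_entropyIntegrand (ρ k)).comp
        ((lp.lipschitzWith_one_eval 1 k).continuous.comp ProbNat.isClosedEmbedding_val.continuous))
      fun _ _ => EReal.coe_ennreal_le_coe_ennreal_iff.2
  refine ⟨fun α => ?_, hlsc⟩
  rw [ProbNat.isClosedEmbedding_val.isEmbedding.isCompact_iff,
    isCompact_iff_totallyBounded_isComplete]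
  refine ⟨(ProbNat.totallyBounded_image_sublevel hρnn hρ.summable
    (ENNReal.ofReal_ne_top (r := α))).subset (image_mono fun q hq => ?_),
    (ProbNat.isClosedEmbedding_val.isClosedMap _ (hlsc.isClosed_preimage α)).isComplete⟩
  rw [mem_ofPred_eq, hrel] at hq
  refine EReal.coe_ennreal_le_coe_ennreal_iff.1 (hq.trans ?_)
  rw [EReal.coe_ennreal_ofReal]
  exact EReal.coe_le_coe_iff.2 (le_max_left α 0)
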